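/- arXiv:1510.07804 — 3 statements merged into one kernel-verified Lean document; each statement's English description precedes it below -/
import Mathlib

section
/- Lemma 2.5(1): Let (A, m) be a local noetherian ring, let L →^α M →^β N and L →^{α'} M →^{β'} N be two complexes of finite A-modules (i.e., β∘α = 0 and β'∘α' = 0), and let c be a positive integer. Assume that (a) the first sequence is exact at M (im α = ker β), (b) the two complexes agree modulo m^{c+1}, i.e., (α − α')(L) ⊆ m^{c+1}M and (β − β')(M) ⊆ m^{c+1}N, and (c) the condition (AR)_c holds for α and for β. Then (AR)_c holds for β', i.e., β'(M) ∩ m^n N ⊆ β'(m^{n−c}M) for all n ≥ c. -/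
/-!
Induction on `n`: every `β' x ∈ 𝔪^n N` is `β' x` for some `x ∈ 𝔪^(n-c) M`. For the step, take such
an `x` with `β' x ∈ 𝔪^(n+1) N`. Since `β ≡ β'` modulo `𝔪^(c+1)`, also `β x ∈ 𝔪^(n+1) N`, and
`(AR)_c` for `β` gives `x₁ ∈ 𝔪^(n+1-c) M` with `β x₁ = β x`. By exactness `x - x₁ = α l`, and
since `β'` kills `α'`, the value `β' (α l)` is `β' ((α - α') l')` for an `l'` provided by `(AR)_c`
for `α`; this lies one power of `𝔪` deeper, which is enough.
-/

open IsLocalRing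

/-- The Artin–Rees condition `(AR)_c` for a morphism `φ : M → N` of modules over a local
ring `(A, 𝔪)`: for all `n ≥ c`, `φ(M) ∩ 𝔪^n N ⊆ φ(𝔪^(n-c) M)`. -/
def ArtinReesCond {A : Type*} [CommRing A] [IsLocalRing A]
    {M N : Type*} [AddCommGroup M] [Module A M] [AddCommGroup N] [Module A N]
    (c : ℕ) (φ : M →ₗ[A] N) : Prop :=
  ∀ n : ℕ, c ≤ n →
    LinearMap.range φ ⊓ ((maximalIdeal A) ^ n • ⊤ : Submodule A N) ≤
      Submodule.map φ ((maximalIdeal A) ^ (n - c) • ⊤ : Submodule A M)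

section PowSmulTop

variable {R M N : Type*} [CommRing R] [AddCommGroup M] [Module R M] [AddCommGroup N]
  [Module R N] (I : Ideal R)

theorem Submodule.pow_smul_top_antitone : Antitone fun n : ℕ => I ^ n • (⊤ : Submodule R M) :=
  fun _ _ h => Submodule.smul_mono_left (Ideal.pow_le_pow_right h)

theorem LinearMap.map_pow_smul_top_le {a : ℕ} {f : M →ₗ[R] N}
    (hf : ∀ x, f x ∈ I ^ a • (⊤ : Submodule R N)) (b : ℕ) :
    Submodule.map f (I ^ b • ⊤) ≤ I ^ (b + a) • ⊤ := by
  rw [Submodule.map_smul'', pow_add, Submodule.mul_smul]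
  exact Submodule.smul_mono le_rfl (by rintro _ ⟨x, -, rfl⟩; exact hf x)

end PowSmulTop

section ArtinRees

variable {A : Type*} [CommRing A] [IsLocalRing A] {L M N : Type*} [AddCommGroup L] [Module A L]
  [AddCommGroup M] [Module A M] [AddCommGroup N] [Module A N] {c : ℕ}

local notation "𝔪" => maximalIdeal A

/-- For `n < c` the exponent `n - c` truncates to `0` and the condition holds trivially. -/
theorem artinReesCond_iff (φ : M →ₗ[A] N) : ArtinReesCond c φ ↔
    ∀ (n : ℕ) (x : M), φ x ∈ 𝔪 ^ n • (⊤ : Submodule A N) →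
      ∃ x' ∈ 𝔪 ^ (n - c) • (⊤ : Submodule A M), φ x' = φ x := by
  constructor
  · intro h n x hx
    rcases le_or_gt c n with hcn | hnc
    · exact h n hcn ⟨⟨x, rfl⟩, hx⟩
    · exact ⟨x, by simp [Nat.sub_eq_zero_of_le hnc.le], rfl⟩
  · rintro h n - y ⟨⟨x, rfl⟩, hx⟩
    exact h n x hx

/-- Replace `l` by `l' ∈ 𝔪^(k-c) L` with the same image under `α`; then
`β' (α l') = β' ((α - α') l')` and `(α - α') l' ∈ 𝔪^(k-c+c+1) M ⊆ 𝔪^(k+1) M`. -/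
theorem exists_mem_pow_succ_smul_top_apply_eq {α α' : L →ₗ[A] M} {β' : M →ₗ[A] N}
    (hcx' : β'.comp α' = 0) (hα : ∀ x : L, α x - α' x ∈ 𝔪 ^ (c + 1) • (⊤ : Submodule A M))
    (hARα : ArtinReesCond c α) {k : ℕ} {l : L} (hl : α l ∈ 𝔪 ^ k • (⊤ : Submodule A M)) :
    ∃ v ∈ 𝔪 ^ (k + 1) • (⊤ : Submodule A M), β' v = β' (α l) := by
  obtain ⟨l', hl', hl'l⟩ := (artinReesCond_iff α).1 hARα k l hl
  have hv : (α - α') l' ∈ 𝔪 ^ (k - c + (c + 1)) • (⊤ : Submodule A M) :=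
    LinearMap.map_pow_smul_top_le _ hα _ ⟨l', hl', rfl⟩
  refine ⟨(α - α') l', Submodule.pow_smul_top_antitone _ (by omega) hv, ?_⟩
  rw [LinearMap.sub_apply, map_sub, ← LinearMap.comp_apply β' α', hcx', hl'l]
  simp

theorem exists_mem_pow_succ_sub_smul_top_apply_eq {α α' : L →ₗ[A] M} {β β' : M →ₗ[A] N}
    (hcx' : β'.comp α' = 0) (hexact : LinearMap.range α = LinearMap.ker β)
    (hα : ∀ x : L, α x - α' x ∈ 𝔪 ^ (c + 1) • (⊤ : Submodule A M))
    (hβ : ∀ x : M, β x - β' x ∈ 𝔪 ^ (c + 1) • (⊤ : Submodule A N))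
    (hARα : ArtinReesCond c α) (hARβ : ArtinReesCond c β) {n : ℕ} {x : M}
    (hx : x ∈ 𝔪 ^ (n - c) • (⊤ : Submodule A M))
    (hβ'x : β' x ∈ 𝔪 ^ (n + 1) • (⊤ : Submodule A N)) :
    ∃ x' ∈ 𝔪 ^ (n + 1 - c) • (⊤ : Submodule A M), β' x' = β' x := by
  have hβx : β x ∈ 𝔪 ^ (n + 1) • (⊤ : Submodule A N) := by
    have hdiff : (β - β') x ∈ 𝔪 ^ (n - c + (c + 1)) • (⊤ : Submodule A N) :=
      LinearMap.map_pow_smul_top_le _ hβ _ ⟨x, hx, rfl⟩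
    simpa using Submodule.add_mem _ (Submodule.pow_smul_top_antitone _ (by omega) hdiff) hβ'x
  obtain ⟨x₁, hx₁, hβx₁⟩ := (artinReesCond_iff β).1 hARβ _ x hβx
  obtain ⟨l, hl⟩ : x - x₁ ∈ LinearMap.range α := by
    rw [hexact, LinearMap.mem_ker, map_sub, hβx₁, sub_self]
  have hαl : α l ∈ 𝔪 ^ (n - c) • (⊤ : Submodule A M) :=
    hl ▸ Submodule.sub_mem _ hx (Submodule.pow_smul_top_antitone _ (by omega) hx₁)
  obtain ⟨v, hv, hβ'v⟩ := exists_mem_pow_succ_smul_top_apply_eq hcx' hα hARα hαl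
  refine ⟨x₁ + v, Submodule.add_mem _ hx₁ (Submodule.pow_smul_top_antitone _ (by omega) hv), ?_⟩
  rw [map_add, hβ'v, hl, ← map_add, add_sub_cancel]

end ArtinRees

theorem lemma_2_5_part1_general {A : Type*} [CommRing A] [IsLocalRing A]
    {L M N : Type*} [AddCommGroup L] [Module A L] [AddCommGroup M] [Module A M]
    [AddCommGroup N] [Module A N]
    (α α' : L →ₗ[A] M) (β β' : M →ₗ[A] N)
    (hcx' : β'.comp α' = 0)
    (c : ℕ)
    (hexact : LinearMap.range α = LinearMap.ker β)
    (hα : ∀ x : L, α x - α' x ∈ ((maximalIdeal A) ^ (c + 1) • ⊤ : Submodule A M))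
    (hβ : ∀ x : M, β x - β' x ∈ ((maximalIdeal A) ^ (c + 1) • ⊤ : Submodule A N))
    (hARα : ArtinReesCond c α) (hARβ : ArtinReesCond c β) :
    ArtinReesCond c β' := by
  refine (artinReesCond_iff β').2 fun n => ?_
  induction n with
  | zero => exact fun x _ => ⟨x, by simp, rfl⟩
  | succ n ih =>
    intro x hx
    obtain ⟨x₀, hx₀, hx₀x⟩ := ih x (Submodule.pow_smul_top_antitone _ n.le_succ hx)
    obtain ⟨x', hx', hx'x₀⟩ :=
      exists_mem_pow_succ_sub_smul_top_apply_eq hcx' hexact hα hβ hARα hARβ hx₀ (hx₀x ▸ hx)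
    exact ⟨x', hx', hx'x₀.trans hx₀x⟩

/-- Lemma 2.5(1): under the hypotheses of Lemma 2.5, the condition `(AR)_c` holds for `β'`. -/
theorem lemma_2_5_part1 {A : Type*} [CommRing A] [IsLocalRing A] [IsNoetherianRing A]
    {L M N : Type*} [AddCommGroup L] [Module A L] [AddCommGroup M] [Module A M]
    [AddCommGroup N] [Module A N]
    [Module.Finite A L] [Module.Finite A M] [Module.Finite A N]
    (α α' : L →ₗ[A] M) (β β' : M →ₗ[A] N)
    (hcx : β.comp α = 0) (hcx' : β'.comp α' = 0)
    (c : ℕ) (hc : 0 < c)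
    (hexact : LinearMap.range α = LinearMap.ker β)
    (hα : ∀ x : L, α x - α' x ∈ ((maximalIdeal A) ^ (c + 1) • ⊤ : Submodule A M))
    (hβ : ∀ x : M, β x - β' x ∈ ((maximalIdeal A) ^ (c + 1) • ⊤ : Submodule A N))
    (hARα : ArtinReesCond c α) (hARβ : ArtinReesCond c β) :
    ArtinReesCond c β' :=
  lemma_2_5_part1_general α α' β β' hcx' c hexact hα hβ hARα hARβ
end

section
/- Lemma 2.5(2): Let (A, m) be a local noetherian ring, let L →^α M →^β N and L →^{α'} M →^{β'} N be two complexes of finite A-modules (i.e., β∘α = 0 and β'∘α' = 0), and let c be a positive integer. Assume that (a) the first sequence is exact at M (im α = ker β), (b) the two complexes agree modulo m^{c+1}, i.e., (α − α')(L) ⊆ m^{c+1}M and (β − β')(M) ⊆ m^{c+1}N, and (c) the condition (AR)_c holds for α and for β. Then the second sequence is also exact at M, i.e., ker β' = im α'. -/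
/-!
Elements of `ker β'` are approximated by elements of `im α'` to arbitrarily high `𝔪`-adic order.
If `w ∈ ker β' ∩ 𝔪^n M`, then `β w = (β - β') w ∈ 𝔪^(n+c+1) N`, so `(AR)_c` for `β` gives
`v ∈ 𝔪^(n+1) M` with `β v = β w`. Then `w - v ∈ ker β = im α` lies in `𝔪^n M`, so `(AR)_c` for `α`
writes it as `α t` with `t ∈ 𝔪^(n-c) L`, and `α t ≡ α' t` modulo `𝔪^(n+1) M`. Hence
`ker β' ⊆ im α' + 𝔪^n M` for every `n`, and Krull's intersection theorem for `M ⧸ im α'` gives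
`ker β' ⊆ im α'`.
-/

open IsLocalRing

section

variable {A : Type*} [CommRing A] {L M N : Type*} [AddCommGroup L] [Module A L]
  [AddCommGroup M] [Module A M] [AddCommGroup N] [Module A N]

lemma LinearMap.mem_pow_add_smul_top_of_mem_pow_smul_top (f : M →ₗ[A] N) {I : Ideal A}
    {k n : ℕ} (hf : ∀ x, f x ∈ (I ^ k • ⊤ : Submodule A N)) {w : M}
    (hw : w ∈ (I ^ n • ⊤ : Submodule A M)) : f w ∈ (I ^ (n + k) • ⊤ : Submodule A N) := by
  have hmap := Submodule.mem_map_of_mem (f := f) hw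
  rw [Submodule.map_smul''] at hmap
  rw [pow_add, Submodule.mul_smul]
  exact Submodule.smul_mono le_rfl (by rintro _ ⟨x, -, rfl⟩; exact hf x) hmap

/-- Krull's intersection theorem, applied to `M ⧸ P`. -/
lemma Submodule.mem_of_forall_mem_sup_pow_smul_top [IsLocalRing A] [IsNoetherianRing A]
    [Module.Finite A M] (P : Submodule A M) {x : M}
    (hx : ∀ n : ℕ, x ∈ P ⊔ (maximalIdeal A ^ n • ⊤ : Submodule A M)) : x ∈ P := by
  rw [← Submodule.Quotient.mk_eq_zero]
  refine IsHausdorff.haus (I := maximalIdeal A) inferInstance _ fun n => ?_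
  have hmap := Submodule.mem_map_of_mem (f := P.mkQ) (hx n)
  rwa [Submodule.map_sup, Submodule.map_smul'', Submodule.map_top, Submodule.range_mkQ,
    Submodule.mkQ_map_self, bot_sup_eq, ← SModEq.zero] at hmap

variable [IsLocalRing A]

lemma ArtinReesCond.range_inf_le {c : ℕ} {φ : M →ₗ[A] N} (h : ArtinReesCond c φ) (n : ℕ) :
    LinearMap.range φ ⊓ (maximalIdeal A ^ n • ⊤ : Submodule A N) ≤
      (maximalIdeal A ^ (n - c) • ⊤ : Submodule A M).map φ := by
  rcases le_or_gt c n with hcn | hnc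
  · exact h n hcn
  · rw [Nat.sub_eq_zero_of_le hnc.le, pow_zero, Ideal.one_eq_top, Submodule.top_smul,
      Submodule.map_top]
    exact inf_le_left

theorem mem_range_sup_pow_succ_smul_top_of_mem_ker {c : ℕ} {α α' : L →ₗ[A] M}
    {β β' : M →ₗ[A] N} (hexact : LinearMap.range α = LinearMap.ker β)
    (hα : ∀ x : L, α x - α' x ∈ (maximalIdeal A ^ (c + 1) • ⊤ : Submodule A M))
    (hβ : ∀ x : M, β x - β' x ∈ (maximalIdeal A ^ (c + 1) • ⊤ : Submodule A N))
    (hARα : ArtinReesCond c α) (hARβ : ArtinReesCond c β) {n : ℕ} {w : M}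
    (hw : w ∈ (maximalIdeal A ^ n • ⊤ : Submodule A M)) (hβ'w : β' w = 0) :
    w ∈ LinearMap.range α' ⊔ (maximalIdeal A ^ (n + 1) • ⊤ : Submodule A M) := by
  have hβw : β w ∈ (maximalIdeal A ^ (n + (c + 1)) • ⊤ : Submodule A N) := by
    simpa [hβ'w] using (β - β').mem_pow_add_smul_top_of_mem_pow_smul_top hβ hw
  obtain ⟨v, hv, hβv⟩ := hARβ.range_inf_le _ ⟨⟨w, rfl⟩, hβw⟩
  replace hv : v ∈ (maximalIdeal A ^ (n + 1) • ⊤ : Submodule A M) := by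
    rwa [show n + (c + 1) - c = n + 1 by omega] at hv
  have hwv : w - v ∈ LinearMap.range α ⊓ (maximalIdeal A ^ n • ⊤ : Submodule A M) :=
    ⟨show w - v ∈ LinearMap.range α by rw [hexact, LinearMap.mem_ker, map_sub, hβv, sub_self],
      sub_mem hw (Submodule.pow_smul_top_le _ _ n.le_succ hv)⟩
  obtain ⟨t, ht, hαt⟩ := hARα.range_inf_le n hwv
  have hαα't : α t - α' t ∈ (maximalIdeal A ^ (n + 1) • ⊤ : Submodule A M) :=
    Submodule.pow_smul_top_le _ _ (by omega)
      ((α - α').mem_pow_add_smul_top_of_mem_pow_smul_top hα ht)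
  refine Submodule.mem_sup.mpr ⟨α' t, ⟨t, rfl⟩, α t - α' t + v, add_mem hαα't hv, ?_⟩
  rw [hαt]
  abel

theorem ker_le_range_sup_pow_smul_top {c : ℕ} {α α' : L →ₗ[A] M} {β β' : M →ₗ[A] N}
    (hcx' : β'.comp α' = 0) (hexact : LinearMap.range α = LinearMap.ker β)
    (hα : ∀ x : L, α x - α' x ∈ (maximalIdeal A ^ (c + 1) • ⊤ : Submodule A M))
    (hβ : ∀ x : M, β x - β' x ∈ (maximalIdeal A ^ (c + 1) • ⊤ : Submodule A N))
    (hARα : ArtinReesCond c α) (hARβ : ArtinReesCond c β) (n : ℕ) :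
    LinearMap.ker β' ≤ LinearMap.range α' ⊔ (maximalIdeal A ^ n • ⊤ : Submodule A M) := by
  induction n with
  | zero => simp
  | succ n ih =>
    have hstep : (maximalIdeal A ^ n • ⊤ : Submodule A M) ⊓ LinearMap.ker β' ≤
        LinearMap.range α' ⊔ (maximalIdeal A ^ (n + 1) • ⊤ : Submodule A M) :=
      fun w ⟨hw, hβ'w⟩ => mem_range_sup_pow_succ_smul_top_of_mem_ker hexact hα hβ hARα hARβ hw hβ'w
    calc LinearMap.ker β'
        ≤ (LinearMap.range α' ⊔ (maximalIdeal A ^ n • ⊤ : Submodule A M)) ⊓ LinearMap.ker β' :=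
          le_inf ih le_rfl
      _ = LinearMap.range α' ⊔ (maximalIdeal A ^ n • ⊤ : Submodule A M) ⊓ LinearMap.ker β' :=
          sup_inf_assoc_of_le _ (LinearMap.range_le_ker_iff.mpr hcx')
      _ ≤ LinearMap.range α' ⊔ (maximalIdeal A ^ (n + 1) • ⊤ : Submodule A M) :=
          sup_le le_sup_left hstep

end

theorem lemma_2_5_part2_general {A : Type*} [CommRing A] [IsLocalRing A] [IsNoetherianRing A]
    {L M N : Type*} [AddCommGroup L] [Module A L] [AddCommGroup M] [Module A M]
    [AddCommGroup N] [Module A N]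
    [Module.Finite A M]
    (α α' : L →ₗ[A] M) (β β' : M →ₗ[A] N)
    (hcx' : β'.comp α' = 0)
    (c : ℕ)
    (hexact : LinearMap.range α = LinearMap.ker β)
    (hα : ∀ x : L, α x - α' x ∈ ((maximalIdeal A) ^ (c + 1) • ⊤ : Submodule A M))
    (hβ : ∀ x : M, β x - β' x ∈ ((maximalIdeal A) ^ (c + 1) • ⊤ : Submodule A N))
    (hARα : ArtinReesCond c α) (hARβ : ArtinReesCond c β) :
    LinearMap.range α' = LinearMap.ker β' :=
  le_antisymm (LinearMap.range_le_ker_iff.mpr hcx') fun _ hx =>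
    (LinearMap.range α').mem_of_forall_mem_sup_pow_smul_top fun n =>
      ker_le_range_sup_pow_smul_top hcx' hexact hα hβ hARα hARβ n hx

/-- Lemma 2.5(2): under the hypotheses of Lemma 2.5, the second complex is also exact at `M`. -/
theorem lemma_2_5_part2 {A : Type*} [CommRing A] [IsLocalRing A] [IsNoetherianRing A]
    {L M N : Type*} [AddCommGroup L] [Module A L] [AddCommGroup M] [Module A M]
    [AddCommGroup N] [Module A N]
    [Module.Finite A L] [Module.Finite A M] [Module.Finite A N]
    (α α' : L →ₗ[A] M) (β β' : M →ₗ[A] N)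
    (hcx : β.comp α = 0) (hcx' : β'.comp α' = 0)
    (c : ℕ) (hc : 0 < c)
    (hexact : LinearMap.range α = LinearMap.ker β)
    (hα : ∀ x : L, α x - α' x ∈ ((maximalIdeal A) ^ (c + 1) • ⊤ : Submodule A M))
    (hβ : ∀ x : M, β x - β' x ∈ ((maximalIdeal A) ^ (c + 1) • ⊤ : Submodule A N))
    (hARα : ArtinReesCond c α) (hARβ : ArtinReesCond c β) :
    LinearMap.range α' = LinearMap.ker β' :=
  lemma_2_5_part2_general α α' β β' hcx' c hexact hα hβ hARα hARβ
end

section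
/- Lemma 2.5(3): Let (A, m) be a local noetherian ring, let L →^α M →^β N and L →^{α'} M →^{β'} N be two complexes of finite A-modules (i.e., β∘α = 0 and β'∘α' = 0), and let c be a positive integer. Assume that (a) the first sequence is exact at M (im α = ker β), (b) the two complexes agree modulo m^{c+1}, i.e., (α − α')(L) ⊆ m^{c+1}M and (β − β')(M) ⊆ m^{c+1}N, and (c) the condition (AR)_c holds for α and for β. Then for every n ≥ 0 one has the equality of submodules of N: m^{n+1}N + (β(M) ∩ m^n N) = m^{n+1}N + (β'(M) ∩ m^n N). Consequently, for every n ≥ 0 the n-th graded pieces Gr_m(coker β)_n = m^n N/(m^{n+1}N + β(M) ∩ m^n N) and Gr_m(coker β')_n = m^n N/(m^{n+1}N + β'(M) ∩ m^n N) are isomorphic, and there is an isomorphism Gr_m(coker β) ≅ Gr_m(coker β') of graded Gr_m(A)-modules. -/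
open IsLocalRing

/-- The `n`-th graded piece `𝔪^n N / (𝔪^(n+1) N + β(M) ∩ 𝔪^n N)` of the associated graded
module `Gr_𝔪(coker β)` of the cokernel of `β : M → N`. -/
def GrCokerPiece {A : Type*} [CommRing A] [IsLocalRing A]
    {M N : Type*} [AddCommGroup M] [Module A M] [AddCommGroup N] [Module A N]
    (β : M →ₗ[A] N) (n : ℕ) : Type _ :=
  ↥((maximalIdeal A) ^ n • ⊤ : Submodule A N) ⧸
    (Submodule.comap ((maximalIdeal A) ^ n • ⊤ : Submodule A N).subtype
      (((maximalIdeal A) ^ (n + 1) • ⊤ : Submodule A N) ⊔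
        (LinearMap.range β ⊓ ((maximalIdeal A) ^ n • ⊤ : Submodule A N))))

noncomputable instance {A : Type*} [CommRing A] [IsLocalRing A]
    {M N : Type*} [AddCommGroup M] [Module A M] [AddCommGroup N] [Module A N]
    (β : M →ₗ[A] N) (n : ℕ) : AddCommGroup (GrCokerPiece β n) :=
  inferInstanceAs (AddCommGroup (_ ⧸ _))

noncomputable instance {A : Type*} [CommRing A] [IsLocalRing A]
    {M N : Type*} [AddCommGroup M] [Module A M] [AddCommGroup N] [Module A N]
    (β : M →ₗ[A] N) (n : ℕ) : Module A (GrCokerPiece β n) :=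
  inferInstanceAs (Module A (_ ⧸ _))

/-! Modulo `𝔪^(n+1)`, an element of `β(M) ∩ 𝔪^n N` can be moved from `β` to `β'`: by `(AR)_c` it
has a preimage in `𝔪^(n-c) M`, on which `β` and `β'` differ by an element of `𝔪^(n+1) N`. This
gives one inclusion. The other needs `(AR)_c` for `β'`, which is proved by lifting `x ∈ β'(M) ∩ 𝔪^n N`
to `𝔪^k M` one step in `k` at a time: a lift `m ∈ 𝔪^k M` has `β m ∈ 𝔪^(k+c+1) N`, so `(AR)_c` for `β`
gives `m₁ ∈ 𝔪^(k+1) M` with `m - m₁ ∈ ker β = α(L)`, and `(AR)_c` for `α` writes `m - m₁ = α l` with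
`α l - α' l ∈ 𝔪^(k+1) M`; then `m₁ + α l - α' l ∈ 𝔪^(k+1) M` is a new lift, as `β' ∘ α' = 0`. -/

section Congruence

variable {A M N : Type*} [CommRing A] [AddCommGroup M] [Module A M] [AddCommGroup N] [Module A N]

theorem apply_mem_pow_add_smul_top {I : Ideal A} {d k : ℕ} (φ : M →ₗ[A] N)
    (hφ : ∀ x, φ x ∈ (I ^ d • ⊤ : Submodule A N)) {m : M} (hm : m ∈ (I ^ k • ⊤ : Submodule A M)) :
    φ m ∈ (I ^ (k + d) • ⊤ : Submodule A N) := by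
  have hrange : LinearMap.range φ ≤ I ^ d • ⊤ := by
    rintro _ ⟨x, rfl⟩
    exact hφ x
  have hmap : φ m ∈ Submodule.map φ (I ^ k • ⊤) := Submodule.mem_map_of_mem hm
  rw [Submodule.map_smul'', ← LinearMap.range_eq_map] at hmap
  rw [pow_add, mul_smul]
  exact Submodule.smul_mono le_rfl hrange hmap

theorem sub_apply_mem_pow_add_smul_top {I : Ideal A} {d k : ℕ} {φ ψ : M →ₗ[A] N}
    (hφψ : ∀ x, φ x - ψ x ∈ (I ^ d • ⊤ : Submodule A N)) {m : M}
    (hm : m ∈ (I ^ k • ⊤ : Submodule A M)) :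
    φ m - ψ m ∈ (I ^ (k + d) • ⊤ : Submodule A N) :=
  apply_mem_pow_add_smul_top (φ - ψ) hφψ hm

end Congruence

namespace ArtinReesCond

variable {A L M N : Type*} [CommRing A] [IsLocalRing A] [AddCommGroup L] [Module A L]
  [AddCommGroup M] [Module A M] [AddCommGroup N] [Module A N]
  {c : ℕ} {φ ψ : M →ₗ[A] N}

theorem exists_apply_eq_sub_mem (hAR : ArtinReesCond c φ)
    (hφψ : ∀ x, φ x - ψ x ∈ ((maximalIdeal A) ^ (c + 1) • ⊤ : Submodule A N)) {n : ℕ} {x : N}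
    (hx : x ∈ LinearMap.range φ ⊓ ((maximalIdeal A) ^ n • ⊤ : Submodule A N)) :
    ∃ m, φ m = x ∧ φ m - ψ m ∈ ((maximalIdeal A) ^ (n + 1) • ⊤ : Submodule A N) := by
  rcases lt_or_ge n c with hnc | hcn
  · obtain ⟨m, rfl⟩ := hx.1
    exact ⟨m, rfl, Submodule.smul_mono_left (Ideal.pow_le_pow_right (by omega)) (hφψ m)⟩
  · obtain ⟨m, hm, rfl⟩ := hAR n hcn hx
    refine ⟨m, rfl, ?_⟩
    simpa only [Nat.sub_add_cancel hcn, ← add_assoc] using sub_apply_mem_pow_add_smul_top hφψ hm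

theorem range_inf_le_sup_of_congr (hAR : ArtinReesCond c φ)
    (hφψ : ∀ x, φ x - ψ x ∈ ((maximalIdeal A) ^ (c + 1) • ⊤ : Submodule A N)) (n : ℕ) :
    LinearMap.range φ ⊓ ((maximalIdeal A) ^ n • ⊤ : Submodule A N) ≤
      ((maximalIdeal A) ^ (n + 1) • ⊤ : Submodule A N) ⊔
        (LinearMap.range ψ ⊓ ((maximalIdeal A) ^ n • ⊤ : Submodule A N)) := by
  intro x hx
  obtain ⟨m, rfl, hdiff⟩ := hAR.exists_apply_eq_sub_mem hφψ hx
  have hψm : ψ m ∈ ((maximalIdeal A) ^ n • ⊤ : Submodule A N) := by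
    simpa using Submodule.sub_mem _ hx.2
      (Submodule.smul_mono_left (Ideal.pow_le_pow_right n.le_succ) hdiff)
  rw [← sub_add_cancel (φ m) (ψ m)]
  exact Submodule.add_mem_sup hdiff ⟨LinearMap.mem_range_self ψ m, hψm⟩

variable {α α' : L →ₗ[A] M} {β β' : M →ₗ[A] N}

theorem exists_mem_pow_succ_smul_top_apply_eq (hcx' : β'.comp α' = 0)
    (hexact : LinearMap.range α = LinearMap.ker β)
    (hα : ∀ x, α x - α' x ∈ ((maximalIdeal A) ^ (c + 1) • ⊤ : Submodule A M))
    (hARα : ArtinReesCond c α) (hARβ : ArtinReesCond c β) {k : ℕ} {m : M}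
    (hm : m ∈ ((maximalIdeal A) ^ k • ⊤ : Submodule A M))
    (hβm : β m ∈ ((maximalIdeal A) ^ (k + c + 1) • ⊤ : Submodule A N)) :
    ∃ m' ∈ ((maximalIdeal A) ^ (k + 1) • ⊤ : Submodule A M), β' m' = β' m := by
  obtain ⟨m₁, hm₁, hβm₁⟩ := hARβ (k + c + 1) (by omega) ⟨LinearMap.mem_range_self β m, hβm⟩
  rw [show k + c + 1 - c = k + 1 by omega] at hm₁
  have hker : m - m₁ ∈ LinearMap.range α := by
    rw [hexact, LinearMap.mem_ker, map_sub, hβm₁, sub_self]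
  have hmem : m - m₁ ∈ ((maximalIdeal A) ^ k • ⊤ : Submodule A M) :=
    Submodule.sub_mem _ hm (Submodule.smul_mono_left (Ideal.pow_le_pow_right k.le_succ) hm₁)
  obtain ⟨l, hl, hdiff⟩ := hARα.exists_apply_eq_sub_mem hα ⟨hker, hmem⟩
  refine ⟨m₁ + (α l - α' l), Submodule.add_mem _ hm₁ hdiff, ?_⟩
  have hβ'α' : β' (α' l) = 0 := LinearMap.congr_fun hcx' l
  rw [map_add, map_sub, hβ'α', sub_zero, ← map_add, hl, add_sub_cancel]

theorem of_congr (hcx' : β'.comp α' = 0) (hexact : LinearMap.range α = LinearMap.ker β)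
    (hα : ∀ x, α x - α' x ∈ ((maximalIdeal A) ^ (c + 1) • ⊤ : Submodule A M))
    (hβ : ∀ x, β x - β' x ∈ ((maximalIdeal A) ^ (c + 1) • ⊤ : Submodule A N))
    (hARα : ArtinReesCond c α) (hARβ : ArtinReesCond c β) :
    ArtinReesCond c β' := by
  rintro n hn x ⟨⟨m₀, rfl⟩, hx⟩
  suffices ∀ k ≤ n - c, ∃ m ∈ ((maximalIdeal A) ^ k • ⊤ : Submodule A M), β' m = β' m₀ from
    this (n - c) le_rfl
  intro k
  induction k with
  | zero => exact fun _ => ⟨m₀, by simp, rfl⟩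
  | succ k ih =>
    intro hk
    obtain ⟨m, hm, hβ'm⟩ := ih (by omega)
    have hβm : β m ∈ ((maximalIdeal A) ^ (k + c + 1) • ⊤ : Submodule A N) := by
      rw [← sub_add_cancel (β m) (β' m), add_assoc]
      refine Submodule.add_mem _ (sub_apply_mem_pow_add_smul_top hβ hm) ?_
      exact hβ'm ▸ Submodule.smul_mono_left (Ideal.pow_le_pow_right (by omega)) hx
    obtain ⟨m', hm', hβ'm'⟩ :=
      exists_mem_pow_succ_smul_top_apply_eq hcx' hexact hα hARα hARβ hm hβm
    exact ⟨m', hm', hβ'm'.trans hβ'm⟩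

end ArtinReesCond

theorem lemma_2_5_part3_general {A : Type*} [CommRing A] [IsLocalRing A]
    {L M N : Type*} [AddCommGroup L] [Module A L] [AddCommGroup M] [Module A M]
    [AddCommGroup N] [Module A N]
    (α α' : L →ₗ[A] M) (β β' : M →ₗ[A] N)
    (hcx' : β'.comp α' = 0)
    (c : ℕ)
    (hexact : LinearMap.range α = LinearMap.ker β)
    (hα : ∀ x : L, α x - α' x ∈ ((maximalIdeal A) ^ (c + 1) • ⊤ : Submodule A M))
    (hβ : ∀ x : M, β x - β' x ∈ ((maximalIdeal A) ^ (c + 1) • ⊤ : Submodule A N))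
    (hARα : ArtinReesCond c α) (hARβ : ArtinReesCond c β) :
    (∀ n : ℕ,
      ((maximalIdeal A) ^ (n + 1) • ⊤ : Submodule A N) ⊔
          (LinearMap.range β ⊓ ((maximalIdeal A) ^ n • ⊤ : Submodule A N)) =
        ((maximalIdeal A) ^ (n + 1) • ⊤ : Submodule A N) ⊔
          (LinearMap.range β' ⊓ ((maximalIdeal A) ^ n • ⊤ : Submodule A N))) ∧
    (∀ n : ℕ, Nonempty (GrCokerPiece β n ≃ₗ[A] GrCokerPiece β' n)) := by
  have hARβ' : ArtinReesCond c β' := .of_congr hcx' hexact hα hβ hARα hARβ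
  have hβ' : ∀ x, β' x - β x ∈ ((maximalIdeal A) ^ (c + 1) • ⊤ : Submodule A N) :=
    fun x => by simpa using Submodule.neg_mem _ (hβ x)
  have hsup : ∀ n : ℕ,
      ((maximalIdeal A) ^ (n + 1) • ⊤ : Submodule A N) ⊔
          (LinearMap.range β ⊓ ((maximalIdeal A) ^ n • ⊤ : Submodule A N)) =
        ((maximalIdeal A) ^ (n + 1) • ⊤ : Submodule A N) ⊔
          (LinearMap.range β' ⊓ ((maximalIdeal A) ^ n • ⊤ : Submodule A N)) := fun n =>
    le_antisymm (sup_le le_sup_left (hARβ.range_inf_le_sup_of_congr hβ n))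
      (sup_le le_sup_left (hARβ'.range_inf_le_sup_of_congr hβ' n))
  exact ⟨hsup, fun n => ⟨Submodule.quotEquivOfEq _ _ (by rw [hsup n])⟩⟩

/-- Lemma 2.5(3): under the hypotheses of Lemma 2.5, for every `n ≥ 0` one has
`𝔪^(n+1) N + (β(M) ∩ 𝔪^n N) = 𝔪^(n+1) N + (β'(M) ∩ 𝔪^n N)` as submodules of `N`;
consequently the `n`-th graded pieces of `Gr_𝔪(coker β)` and `Gr_𝔪(coker β')` are
isomorphic for every `n`. -/
theorem lemma_2_5_part3 {A : Type*} [CommRing A] [IsLocalRing A] [IsNoetherianRing A]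
    {L M N : Type*} [AddCommGroup L] [Module A L] [AddCommGroup M] [Module A M]
    [AddCommGroup N] [Module A N]
    [Module.Finite A L] [Module.Finite A M] [Module.Finite A N]
    (α α' : L →ₗ[A] M) (β β' : M →ₗ[A] N)
    (hcx : β.comp α = 0) (hcx' : β'.comp α' = 0)
    (c : ℕ) (hc : 0 < c)
    (hexact : LinearMap.range α = LinearMap.ker β)
    (hα : ∀ x : L, α x - α' x ∈ ((maximalIdeal A) ^ (c + 1) • ⊤ : Submodule A M))
    (hβ : ∀ x : M, β x - β' x ∈ ((maximalIdeal A) ^ (c + 1) • ⊤ : Submodule A N))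
    (hARα : ArtinReesCond c α) (hARβ : ArtinReesCond c β) :
    (∀ n : ℕ,
      ((maximalIdeal A) ^ (n + 1) • ⊤ : Submodule A N) ⊔
          (LinearMap.range β ⊓ ((maximalIdeal A) ^ n • ⊤ : Submodule A N)) =
        ((maximalIdeal A) ^ (n + 1) • ⊤ : Submodule A N) ⊔
          (LinearMap.range β' ⊓ ((maximalIdeal A) ^ n • ⊤ : Submodule A N))) ∧
    (∀ n : ℕ, Nonempty (GrCokerPiece β n ≃ₗ[A] GrCokerPiece β' n)) :=
  lemma_2_5_part3_general α α' β β' hcx' c hexact hα hβ hARα hARβ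
end
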